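/- Let M be a set carrying a fixed linear order, and suppose two commutative semiring structures (with operations +₁, *₁ and +₂, *₂) are given on M, each of which makes M (with the given order) a linearly ordered commutative semiring in which 0 is the least element, discretely ordered, with subtraction and with division with remainder. If a and b are nonstandard (with respect to either structure; the standard elements agree since they are the elements with only finitely many predecessors), then there is an order automorphism f : M ≃o M with f (a *₁ b) = a *₂ b. -/

import Mathlib

/-- The bundled class `LinearOrderedCommSemiring` of the older Mathlib (since removed):
a commutative semiring with a linear order making it a strict ordered semiring. -/
class LinearOrderedCommSemiring (M : Type*) extends CommSemiring M, LinearOrder M,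
    IsStrictOrderedRing M

/-- `a` is a nonstandard element: above every natural number cast. -/
def Nonstd {M : Type*} [LinearOrderedCommSemiring M] (a : M) : Prop :=
  ∀ n : ℕ, (n : M) < a

def E0 {M : Type*} [LinearOrderedCommSemiring M] (a b : M) : Prop :=
  ∃ n : ℕ, a < b + (n : M) ∧ b < a + (n : M)

def E1 {M : Type*} [LinearOrderedCommSemiring M] (a b : M) : Prop :=
  ∃ c : M, (∀ n : ℕ, (n : M) * c < a ∧ (n : M) * c < b) ∧ a < b + c ∧ b < a + c

def E2 {M : Type*} [LinearOrderedCommSemiring M] (a b : M) : Prop :=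
  ∃ n : ℕ, a < (n : M) * b ∧ b < (n : M) * a

def E3 {M : Type*} [LinearOrderedCommSemiring M] (a b : M) : Prop :=
  ∃ c : M, (∀ n : ℕ, c ^ n < a ∧ c ^ n < b) ∧ a < b * c ∧ b < a * c

def E4 {M : Type*} [LinearOrderedCommSemiring M] (a b : M) : Prop :=
  ∃ n : ℕ, a < b ^ n ∧ b < a ^ n

/-- `a E⁵ b`: some order automorphism of `M` maps `a` to `b`. -/
def E5 {M : Type*} [LinearOrderedCommSemiring M] (a b : M) : Prop :=
  ∃ f : M ≃o M, f a = b

/-- `E` is a convex equivalence relation on the nonstandard elements of `M`. -/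
def IsConvexEquiv {M : Type*} [LinearOrderedCommSemiring M] (E : M → M → Prop) : Prop :=
  (∀ a : M, Nonstd a → E a a) ∧
  (∀ a b : M, Nonstd a → Nonstd b → E a b → E b a) ∧
  (∀ a b c : M, Nonstd a → Nonstd b → Nonstd c → E a b → E b c → E a c) ∧
  (∀ a b c : M, Nonstd a → Nonstd b → Nonstd c → a ≤ b → b ≤ c → E a c → E a b)

/-- An almost `{<,+}`-isomorphism: an order isomorphism whose additivity error is finite. -/
def IsAlmostAddIso {M₁ M₂ : Type*} [LinearOrderedCommSemiring M₁]
    [LinearOrderedCommSemiring M₂] (f : M₁ ≃o M₂) : Prop :=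
  ∀ a b : M₁, ∃ n : ℕ, f (a + b) < f a + f b + (n : M₂) ∧ f a + f b < f (a + b) + (n : M₂)

/-- `M` is 2-order-rigid. -/
def OrderRigid2 (M : Type*) [LinearOrderedCommSemiring M] : Prop :=
  ∀ a b : M, Nonstd a → Nonstd b →
    Nonempty ({x : M // x < a} ≃o {x : M // x < b}) → E2 a b

/-- `M` is 3-order-rigid. -/
def OrderRigid3 (M : Type*) [LinearOrderedCommSemiring M] : Prop :=
  ∀ a b : M, Nonstd a → Nonstd b →
    Nonempty ({x : M // x < a} ≃o {x : M // x < b}) → E3 a b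

/-- `M` is 4-order-rigid. -/
def OrderRigid4 (M : Type*) [LinearOrderedCommSemiring M] : Prop :=
  ∀ a b : M, Nonstd a → Nonstd b →
    Nonempty ({x : M // x < a} ≃o {x : M // x < b}) → E4 a b

/-!
Division with remainder by `b` identifies the initial segment below `a * b` with the
lexicographic product of the segments below `a` and below `b`. As both structures carry the same
order, the segments below `a *₁ b` and `a *₂ b` are therefore order-isomorphic. Translation `x ↦ c + x` maps `M` onto the final segment `[c, ∞)`, so any two
final segments are order-isomorphic as well, and gluing the two isomorphisms gives an
automorphism of `M` sending `a *₁ b` to `a *₂ b`.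
-/

open Set

theorem exists_orderIso_apply_eq_of_Iio_of_Ici {α : Type*} [LinearOrder α] {u v : α}
    (e : Iio u ≃o Iio v) (t : Ici u ≃o Ici v) : ∃ f : α ≃o α, f u = v := by
  refine ⟨(OrderIso.sumLexIioIci u).symm.trans
    ((e.sumLexCongr t).trans (OrderIso.sumLexIioIci v)), ?_⟩
  simp only [OrderIso.trans_apply, OrderIso.sumLexIioIci_symm_apply_of_ge le_rfl,
    OrderIso.sumLexCongr_apply]
  exact congrArg Subtype.val t.map_bot

noncomputable def orderIsoIciAddLeft {M : Type*} [AddCommMonoid M] [LinearOrder M]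
    [IsOrderedCancelAddMonoid M] [ExistsAddOfLE M] (h0 : ∀ x : M, 0 ≤ x) (c : M) :
    M ≃o Ici c :=
  StrictMono.orderIsoOfSurjective (fun x => ⟨c + x, le_add_of_nonneg_right (h0 x)⟩)
    (fun _ _ h => Subtype.mk_lt_mk.2 (add_lt_add_right h c))
    fun y => (exists_add_of_le y.2).imp fun _ h => Subtype.ext h.symm

theorem add_one_le_of_lt_of_discrete {α : Type*} [LinearOrder α] [Add α] [One α]
    (hd : ∀ a x : α, ¬(a < x ∧ x < a + 1)) {a b : α} (h : a < b) : a + 1 ≤ b :=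
  not_lt.1 fun h' => hd a b ⟨h, h'⟩

section EuclideanDivision

variable {M : Type*} [CommSemiring M] [LinearOrder M] [IsStrictOrderedRing M]

theorem mul_add_lt_mul_of_lt (h0 : ∀ x : M, 0 ≤ x) (hd : ∀ a x : M, ¬(a < x ∧ x < a + 1))
    {b q q' r : M} (hr : r < b) (hq : q < q') : b * q + r < b * q' :=
  calc b * q + r < b * q + b := add_lt_add_right hr _
    _ = b * (q + 1) := (mul_add_one b q).symm
    _ ≤ b * q' := mul_le_mul_of_nonneg_left (add_one_le_of_lt_of_discrete hd hq) (h0 b)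

theorem exists_mul_add_of_lt_mul (h0 : ∀ x : M, 0 ≤ x)
    (hdiv : ∀ a b : M, b ≠ 0 → ∃ q r : M, a = b * q + r ∧ r < b)
    {a b x : M} (hx : x < a * b) : ∃ q < a, ∃ r < b, b * q + r = x := by
  have hb : b ≠ 0 := by
    rintro rfl
    exact (h0 x).not_gt (by simpa using hx)
  obtain ⟨q, r, rfl, hr⟩ := hdiv x b hb
  refine ⟨q, lt_of_not_ge fun hq => hx.not_ge ?_, r, hr, rfl⟩
  calc a * b = b * a := mul_comm a b
    _ ≤ b * q := mul_le_mul_of_nonneg_left hq (h0 b)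
    _ ≤ b * q + r := le_add_of_nonneg_right (h0 r)

/-- The map `(q, r) ↦ b * q + r`, onto by division with remainder. -/
noncomputable def lexIioOrderIsoIioMul (h0 : ∀ x : M, 0 ≤ x)
    (hd : ∀ a x : M, ¬(a < x ∧ x < a + 1))
    (hdiv : ∀ a b : M, b ≠ 0 → ∃ q r : M, a = b * q + r ∧ r < b) (a b : M) :
    Iio a ×ₗ Iio b ≃o Iio (a * b) :=
  StrictMono.orderIsoOfSurjective
    (fun p => ⟨b * (ofLex p).1 + (ofLex p).2, by
      rw [mem_Iio, mul_comm a]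
      exact mul_add_lt_mul_of_lt h0 hd (ofLex p).2.2 (ofLex p).1.2⟩)
    (fun p p' h => by
      rcases Prod.Lex.lt_iff.1 h with hq | ⟨hq, hr⟩
      · exact (mul_add_lt_mul_of_lt h0 hd (ofLex p).2.2 hq).trans_le
          (le_add_of_nonneg_right (h0 _))
      · rw [Subtype.mk_lt_mk, hq]
        exact add_lt_add_right (Subtype.coe_lt_coe.2 hr) _)
    fun x => by
      obtain ⟨q, hq, r, hr, hx⟩ := exists_mul_add_of_lt_mul h0 hdiv x.2
      exact ⟨toLex (⟨q, hq⟩, ⟨r, hr⟩), Subtype.ext hx⟩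

end EuclideanDivision

theorem two_structures_mul_E5_general {M : Type*}
    (S₁ S₂ : LinearOrderedCommSemiring M)
    (hord : (letI := S₁; (inferInstance : LinearOrder M))
          = (letI := S₂; (inferInstance : LinearOrder M)))
    (h0₁ : letI := S₁; ∀ x : M, 0 ≤ x)
    (h0₂ : letI := S₂; ∀ x : M, 0 ≤ x)
    (hd₁ : letI := S₁; ∀ a x : M, ¬(a < x ∧ x < a + 1))
    (hd₂ : letI := S₂; ∀ a x : M, ¬(a < x ∧ x < a + 1))
    (hsub₁ : letI := S₁; ∀ a b : M, a ≤ b → ∃ c, b = a + c)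
    (hdiv₁ : letI := S₁; ∀ a b : M, b ≠ 0 → ∃ q r : M, a = b * q + r ∧ r < b)
    (hdiv₂ : letI := S₂; ∀ a b : M, b ≠ 0 → ∃ q r : M, a = b * q + r ∧ r < b)
    (a b : M) :
    letI := S₁
    ∃ f : M ≃o M, f (a * b) = (letI := S₂; a * b) := by
  let _ := S₁
  have : ExistsAddOfLE M := ⟨hsub₁ _ _⟩
  have e₁ := lexIioOrderIsoIioMul h0₁ hd₁ hdiv₁ a b
  have t := (orderIsoIciAddLeft h0₁ (a * b)).symm.trans
    (orderIsoIciAddLeft h0₁ (letI := S₂; a * b))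
  have e₂ := (letI := S₂; lexIioOrderIsoIioMul h0₂ hd₂ hdiv₂ a b)
  -- Splitting `S₂` makes its order a variable, which `hord` then replaces by the order of `S₁`.
  obtain @⟨R₂, L₂, h₂⟩ := S₂
  change _ = L₂ at hord
  subst hord
  exact exists_orderIso_apply_eq_of_Iio_of_Ici (e₁.symm.trans e₂) t

/-- two semiring structures on the same linearly ordered set: the two
products of nonstandard `a, b` are conjugate by an order automorphism. -/
theorem two_structures_mul_E5 {M : Type*}
    (S₁ S₂ : LinearOrderedCommSemiring M)
    (hord : (letI := S₁; (inferInstance : LinearOrder M))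
          = (letI := S₂; (inferInstance : LinearOrder M)))
    (h0₁ : letI := S₁; ∀ x : M, 0 ≤ x)
    (h0₂ : letI := S₂; ∀ x : M, 0 ≤ x)
    (hd₁ : letI := S₁; ∀ a x : M, ¬(a < x ∧ x < a + 1))
    (hd₂ : letI := S₂; ∀ a x : M, ¬(a < x ∧ x < a + 1))
    (hsub₁ : letI := S₁; ∀ a b : M, a ≤ b → ∃ c, b = a + c)
    (hsub₂ : letI := S₂; ∀ a b : M, a ≤ b → ∃ c, b = a + c)
    (hdiv₁ : letI := S₁; ∀ a b : M, b ≠ 0 → ∃ q r : M, a = b * q + r ∧ r < b)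
    (hdiv₂ : letI := S₂; ∀ a b : M, b ≠ 0 → ∃ q r : M, a = b * q + r ∧ r < b)
    (a b : M)
    (ha₁ : letI := S₁; ∀ n : ℕ, (n : M) < a)
    (ha₂ : letI := S₂; ∀ n : ℕ, (n : M) < a)
    (hb₁ : letI := S₁; ∀ n : ℕ, (n : M) < b)
    (hb₂ : letI := S₂; ∀ n : ℕ, (n : M) < b) :
    letI := S₁
    ∃ f : M ≃o M, f (a * b) = (letI := S₂; a * b) :=
  two_structures_mul_E5_general S₁ S₂ hord h0₁ h0₂ hd₁ hd₂ hsub₁ hdiv₁ hdiv₂ a b
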